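/- arXiv:0808.3247 — 5 statements merged into one kernel-verified Lean document; each statement's English description precedes it below -/
import Mathlib

section
/- Proposition 1 (Fatou property of Bilateral Grand Lebesgue spaces). Let ψ ∈ Ψ(a,b) and let (f_n) be a sequence of measurable functions f_n : X → [0,∞) such that for μ-a.e. x the sequence (f_n(x)) is nondecreasing and converges to f(x), and such that sup_n ‖f_n‖_{G(ψ)} < ∞. Then the sequence (‖f_n‖_{G(ψ)}) is nondecreasing and converges to ‖f‖_{G(ψ)}; in particular ‖f‖_{G(ψ)} = sup_n ‖f_n‖_{G(ψ)} < ∞. -/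
open MeasureTheory ENNReal Set

noncomputable section

/-- The set of exponents p with a < p and p < b (b may be infinite). -/
def expSet (a : ℝ) (b : ℝ≥0∞) : Set ℝ := {p : ℝ | a < p ∧ ENNReal.ofReal p < b}

/-- The class Ψ(a,b). -/
structure IsPsi (a : ℝ) (b : ℝ≥0∞) (ψ : ℝ → ℝ) : Prop where
  one_le : ∀ p ∈ expSet a b, 1 ≤ ψ p
  bddOnCompacts : ∀ c d : ℝ, c ∈ expSet a b → d ∈ expSet a b → BddAbove (ψ '' Set.Icc c d)
  logConvex : ConvexOn ℝ (expSet a b) fun p => Real.log (ψ p)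

/-- L^p norm (real exponent). -/
def lpNorm {X : Type*} [MeasurableSpace X] (μ : Measure X) (f : X → ℝ) (p : ℝ) : ℝ≥0∞ :=
  (∫⁻ x, ENNReal.ofReal (|f x| ^ p) ∂μ) ^ (1 / p)

/-- Bilateral Grand Lebesgue norm. -/
def glNorm {X : Type*} [MeasurableSpace X] (μ : Measure X) (a : ℝ) (b : ℝ≥0∞) (ψ : ℝ → ℝ)
    (f : X → ℝ) : ℝ≥0∞ :=
  ⨆ p ∈ expSet a b, lpNorm μ f p / ENNReal.ofReal (ψ p)

/-- L^p norm for extended-real-valued functions. -/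
def lpNormE {X : Type*} [MeasurableSpace X] (μ : Measure X) (g : X → EReal) (p : ℝ) : ℝ≥0∞ :=
  (∫⁻ x, (g x).abs ^ p ∂μ) ^ (1 / p)

/-- Bilateral Grand Lebesgue norm for extended-real-valued functions. -/
def glNormE {X : Type*} [MeasurableSpace X] (μ : Measure X) (a : ℝ) (b : ℝ≥0∞) (ψ : ℝ → ℝ)
    (g : X → EReal) : ℝ≥0∞ :=
  ⨆ p ∈ expSet a b, lpNormE μ g p / ENNReal.ofReal (ψ p)

/-- L^p norm for `ℝ≥0∞`-valued functions. -/
def lpNormNN {X : Type*} [MeasurableSpace X] (μ : Measure X) (g : X → ℝ≥0∞) (p : ℝ) : ℝ≥0∞ :=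
  (∫⁻ x, g x ^ p ∂μ) ^ (1 / p)

end

open Filter Topology

/-! Monotone convergence turns `f n ↑ g` a.e. into `‖f n‖_p ↑ ‖g‖_p` for every exponent `p`,
and both the monotonicity and the limit pass through the supremum over `p` defining the grand
Lebesgue norm, because suprema commute and division by `ψ p` preserves suprema. -/

section LpNorm

variable {X : Type*} [MeasurableSpace X] {μ : Measure X} {p : ℝ}

lemma lpNorm_mono_ae {f g : X → ℝ} (hp : 0 ≤ p) (hfg : ∀ᵐ x ∂μ, |f x| ≤ |g x|) :
    _root_.lpNorm μ f p ≤ _root_.lpNorm μ g p := by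
  unfold _root_.lpNorm
  gcongr ?_ ^ _
  exact lintegral_mono_ae <| hfg.mono fun x hx =>
    ENNReal.ofReal_le_ofReal (Real.rpow_le_rpow (abs_nonneg _) hx hp)

lemma tendsto_lpNorm_of_monotone {f : ℕ → X → ℝ} {g : X → ℝ} (hp : 0 ≤ p)
    (hf : ∀ n, AEMeasurable (f n) μ) (hmono : ∀ᵐ x ∂μ, Monotone fun n => |f n x|)
    (hlim : ∀ᵐ x ∂μ, Tendsto (fun n => |f n x|) atTop (𝓝 |g x|)) :
    Tendsto (fun n => _root_.lpNorm μ (f n) p) atTop (𝓝 (_root_.lpNorm μ g p)) := by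
  have hint : Tendsto (fun n => ∫⁻ x, ENNReal.ofReal (|f n x| ^ p) ∂μ) atTop
      (𝓝 (∫⁻ x, ENNReal.ofReal (|g x| ^ p) ∂μ)) :=
    lintegral_tendsto_of_tendsto_of_monotone
      (fun n => ((hf n).abs.pow_const p).ennreal_ofReal)
      (hmono.mono fun x hx m n hmn =>
        ENNReal.ofReal_le_ofReal (Real.rpow_le_rpow (abs_nonneg _) (hx hmn) hp))
      (hlim.mono fun x hx =>
        (ENNReal.continuous_ofReal.tendsto _).comp (hx.rpow_const (Or.inr hp)))
  exact (ENNReal.continuous_rpow_const.tendsto _).comp hint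

end LpNorm

section GrandLebesgue

variable {X : Type*} [MeasurableSpace X] {μ : Measure X} {a : ℝ} {b : ℝ≥0∞} {ψ : ℝ → ℝ}

lemma glNorm_mono {f g : X → ℝ}
    (h : ∀ p ∈ expSet a b, _root_.lpNorm μ f p ≤ _root_.lpNorm μ g p) :
    glNorm μ a b ψ f ≤ glNorm μ a b ψ g :=
  iSup₂_mono fun p hp => ENNReal.div_le_div_right (h p hp) _

lemma glNorm_eq_iSup {ι : Sort*} {f : ι → X → ℝ} {g : X → ℝ}
    (h : ∀ p ∈ expSet a b, _root_.lpNorm μ g p = ⨆ i, _root_.lpNorm μ (f i) p) :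
    glNorm μ a b ψ g = ⨆ i, glNorm μ a b ψ (f i) := by
  unfold glNorm
  calc ⨆ p ∈ expSet a b, _root_.lpNorm μ g p / ENNReal.ofReal (ψ p)
      = ⨆ p ∈ expSet a b, ⨆ i, _root_.lpNorm μ (f i) p / ENNReal.ofReal (ψ p) :=
        iSup_congr fun p => iSup_congr fun hp => by rw [h p hp, ENNReal.iSup_div]
    _ = ⨆ i, ⨆ p ∈ expSet a b, _root_.lpNorm μ (f i) p / ENNReal.ofReal (ψ p) := by
        simp only [iSup_comm (ι' := ι)]

end GrandLebesgue

theorem fatou_property_BGL_general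
    {X : Type*} [MeasurableSpace X] (μ : Measure X)
    (a : ℝ) (b : ℝ≥0∞) (ha : 1 ≤ a)
    (ψ : ℝ → ℝ)
    (f : ℕ → X → ℝ) (g : X → ℝ)
    (hfmeas : ∀ n, Measurable (f n))
    (hnonneg : ∀ n x, 0 ≤ f n x)
    (hmono : ∀ᵐ x ∂μ, Monotone fun n => f n x)
    (hlim : ∀ᵐ x ∂μ, Filter.Tendsto (fun n => f n x) Filter.atTop (nhds (g x)))
    (hbdd : (⨆ n, glNorm μ a b ψ (f n)) < ⊤) :
    (Monotone fun n => glNorm μ a b ψ (f n)) ∧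
    Filter.Tendsto (fun n => glNorm μ a b ψ (f n)) Filter.atTop (nhds (glNorm μ a b ψ g)) ∧
    glNorm μ a b ψ g = (⨆ n, glNorm μ a b ψ (f n)) ∧
    glNorm μ a b ψ g < ⊤ := by
  have hp_nonneg : ∀ p ∈ expSet a b, 0 ≤ p := fun p hp => by linarith [hp.1]
  have habs_mono : ∀ᵐ x ∂μ, Monotone fun n => |f n x| := by
    filter_upwards [hmono] with x hx
    simpa only [abs_of_nonneg (hnonneg _ x)] using hx
  have hlp_mono : ∀ p ∈ expSet a b, Monotone fun n => _root_.lpNorm μ (f n) p :=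
    fun p hp m n hmn => lpNorm_mono_ae (hp_nonneg p hp) (habs_mono.mono fun x hx => hx hmn)
  have hlp_eq : ∀ p ∈ expSet a b, _root_.lpNorm μ g p = ⨆ n, _root_.lpNorm μ (f n) p :=
    fun p hp => tendsto_nhds_unique
      (tendsto_lpNorm_of_monotone (hp_nonneg p hp) (fun n => (hfmeas n).aemeasurable)
        habs_mono (hlim.mono fun x hx => hx.abs))
      (tendsto_atTop_iSup (hlp_mono p hp))
  have hgl_mono : Monotone fun n => glNorm μ a b ψ (f n) := fun m n hmn =>
    glNorm_mono fun p hp => hlp_mono p hp hmn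
  have hgl_eq : glNorm μ a b ψ g = ⨆ n, glNorm μ a b ψ (f n) := glNorm_eq_iSup hlp_eq
  exact ⟨hgl_mono, hgl_eq ▸ tendsto_atTop_iSup hgl_mono, hgl_eq, hgl_eq ▸ hbdd⟩

/-- Proposition 1 (Fatou property of Bilateral Grand Lebesgue spaces). -/
theorem fatou_property_BGL
    {X : Type*} [MeasurableSpace X] (μ : Measure X) [SigmaFinite μ]
    (a : ℝ) (b : ℝ≥0∞) (ha : 1 ≤ a) (hab : ENNReal.ofReal a < b)
    (ψ : ℝ → ℝ) (hψ : IsPsi a b ψ)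
    (f : ℕ → X → ℝ) (g : X → ℝ)
    (hfmeas : ∀ n, Measurable (f n)) (hgmeas : Measurable g)
    (hnonneg : ∀ n x, 0 ≤ f n x)
    (hmono : ∀ᵐ x ∂μ, Monotone fun n => f n x)
    (hlim : ∀ᵐ x ∂μ, Filter.Tendsto (fun n => f n x) Filter.atTop (nhds (g x)))
    (hbdd : (⨆ n, glNorm μ a b ψ (f n)) < ⊤) :
    (Monotone fun n => glNorm μ a b ψ (f n)) ∧
    Filter.Tendsto (fun n => glNorm μ a b ψ (f n)) Filter.atTop (nhds (glNorm μ a b ψ g)) ∧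
    glNorm μ a b ψ g = (⨆ n, glNorm μ a b ψ (f n)) ∧
    glNorm μ a b ψ g < ⊤ :=
  fatou_property_BGL_general μ a b ha ψ f g hfmeas hnonneg hmono hlim hbdd
end

section
/- Proposition 4. Let ψ, ν, ζ ∈ Ψ(a,b) with ζ(p) = ψ(p)·ν(p) for all p ∈ (a,b). Let m ≥ 1 and let f_1, …, f_m : X → ℝ be measurable functions with max_{1≤i≤m} ‖f_i‖_{G(ψ)} < ∞. Then the pointwise maximum g(x) = max_{1≤i≤m} f_i(x) satisfies ‖g‖_{G(ζ)} ≤ (max_{1≤i≤m} ‖f_i‖_{G(ψ)}) · sup_{p∈(a,b)} m^{1/p}/ν(p). -/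
open MeasureTheory ENNReal Set

/- Fix p. The pointwise maximum equals one of the f_i, so |max_i f_i|^p ≤ ∑_i |f_i|^p, and
integrating gives ‖max_i f_i‖_p ≤ m^{1/p} ψ(p) max_i ‖f_i‖_{G(ψ)}. Dividing by ζ(p) = ψ(p) ν(p)
cancels ψ(p) and leaves the factor m^{1/p} / ν(p). -/

section LpNorm

variable {X : Type*} [MeasurableSpace X] (μ : Measure X)

theorem lpNorm_rpow {f : X → ℝ} {p : ℝ} (hp : p ≠ 0) :
    _root_.lpNorm μ f p ^ p = ∫⁻ x, ENNReal.ofReal (|f x| ^ p) ∂μ := by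
  rw [_root_.lpNorm, one_div, ENNReal.rpow_inv_rpow hp]

theorem ofReal_abs_iSup_rpow_le_sum {ι : Type*} [Fintype ι] (g : ι → ℝ) {p : ℝ} (hp : 0 < p) :
    ENNReal.ofReal (|⨆ i, g i| ^ p) ≤ ∑ i, ENNReal.ofReal (|g i| ^ p) := by
  cases isEmpty_or_nonempty ι
  · simp [Real.iSup_of_isEmpty, Real.zero_rpow hp.ne']
  · obtain ⟨k, hk⟩ := exists_eq_ciSup_of_finite (f := g)
    rw [← hk]
    exact Finset.single_le_sum (f := fun i => ENNReal.ofReal (|g i| ^ p))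
      (fun _ _ => zero_le) (Finset.mem_univ k)

theorem lpNorm_iSup_le {ι : Type*} [Fintype ι] {f : ι → X → ℝ} (hf : ∀ i, Measurable (f i))
    {p : ℝ} (hp : 0 < p) {C : ℝ≥0∞} (hC : ∀ i, _root_.lpNorm μ (f i) p ≤ C) :
    _root_.lpNorm μ (fun x => ⨆ i, f i x) p ≤ (Fintype.card ι : ℝ≥0∞) ^ (1 / p) * C := by
  have hint : ∫⁻ x, ENNReal.ofReal (|⨆ i, f i x| ^ p) ∂μ ≤ Fintype.card ι * C ^ p :=
    calc ∫⁻ x, ENNReal.ofReal (|⨆ i, f i x| ^ p) ∂μ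
        ≤ ∫⁻ x, ∑ i, ENNReal.ofReal (|f i x| ^ p) ∂μ :=
          lintegral_mono fun x => ofReal_abs_iSup_rpow_le_sum _ hp
      _ = ∑ i, _root_.lpNorm μ (f i) p ^ p := by
          rw [lintegral_finsetSum _ fun i _ => ((hf i).abs.pow_const p).ennreal_ofReal]
          simp only [lpNorm_rpow μ hp.ne']
      _ ≤ ∑ _i : ι, C ^ p := Finset.sum_le_sum fun i _ => by gcongr; exact hC i
      _ = Fintype.card ι * C ^ p := by simp
  calc _root_.lpNorm μ (fun x => ⨆ i, f i x) p
      ≤ (Fintype.card ι * C ^ p) ^ (1 / p) := by rw [_root_.lpNorm]; gcongr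
    _ = (Fintype.card ι : ℝ≥0∞) ^ (1 / p) * C := by
        rw [ENNReal.mul_rpow_of_nonneg _ _ (by positivity), one_div, ENNReal.rpow_rpow_inv hp.ne']

end LpNorm

section GrandLebesgue

variable {X : Type*} [MeasurableSpace X] (μ : Measure X) {a : ℝ} {b : ℝ≥0∞} {ψ : ℝ → ℝ}

theorem lpNorm_le_glNorm_mul {f : X → ℝ} {p : ℝ} (hp : p ∈ expSet a b) (hψp : 0 < ψ p) :
    _root_.lpNorm μ f p ≤ glNorm μ a b ψ f * ENNReal.ofReal (ψ p) := by
  refine (ENNReal.div_le_iff_le_mul (Or.inl ?_) (Or.inl ENNReal.ofReal_ne_top)).mp ?_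
  · exact (ENNReal.ofReal_pos.mpr hψp).ne'
  · exact le_iSup₂ (f := fun q (_ : q ∈ expSet a b) =>
      _root_.lpNorm μ f q / ENNReal.ofReal (ψ q)) p hp

end GrandLebesgue

theorem pisier_BGL_general
    {X : Type*} [MeasurableSpace X] (μ : Measure X)
    (a : ℝ) (b : ℝ≥0∞) (ha : 1 ≤ a)
    (ψ ν ζ : ℝ → ℝ) (hψ : IsPsi a b ψ)
    (hmul : ∀ p ∈ expSet a b, ζ p = ψ p * ν p)
    (m : ℕ)
    (f : Fin m → X → ℝ) (hmeas : ∀ i, Measurable (f i)) :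
    glNorm μ a b ζ (fun x => ⨆ i, f i x) ≤
      (⨆ i, glNorm μ a b ψ (f i)) *
        ⨆ p ∈ expSet a b, (m : ℝ≥0∞) ^ (1 / p) / ENNReal.ofReal (ν p) := by
  set S := ⨆ i, glNorm μ a b ψ (f i)
  refine iSup₂_le fun p hp => ?_
  have hp0 : 0 < p := by linarith [hp.1]
  have hψp : 0 < ψ p := by linarith [hψ.one_le p hp]
  have hψ0 : ENNReal.ofReal (ψ p) ≠ 0 := (ENNReal.ofReal_pos.mpr hψp).ne'
  have hfi : ∀ i, _root_.lpNorm μ (f i) p ≤ S * ENNReal.ofReal (ψ p) := fun i =>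
    (lpNorm_le_glNorm_mul μ hp hψp).trans
      (mul_le_mul_left (le_iSup (fun j => glNorm μ a b ψ (f j)) i) _)
  have hmax : _root_.lpNorm μ (fun x => ⨆ i, f i x) p ≤
      (m : ℝ≥0∞) ^ (1 / p) * (S * ENNReal.ofReal (ψ p)) := by
    simpa using lpNorm_iSup_le μ hmeas hp0 hfi
  calc _root_.lpNorm μ (fun x => ⨆ i, f i x) p / ENNReal.ofReal (ζ p)
      ≤ ENNReal.ofReal (ψ p) * (S * (m : ℝ≥0∞) ^ (1 / p)) /
          (ENNReal.ofReal (ψ p) * ENNReal.ofReal (ν p)) := by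
        rw [hmul p hp, ENNReal.ofReal_mul hψp.le]
        gcongr
        exact hmax.trans_eq (by ring)
    _ = S * ((m : ℝ≥0∞) ^ (1 / p) / ENNReal.ofReal (ν p)) := by
        rw [ENNReal.mul_div_mul_left _ _ hψ0 ENNReal.ofReal_ne_top, mul_div_assoc]
    _ ≤ S * ⨆ q ∈ expSet a b, (m : ℝ≥0∞) ^ (1 / q) / ENNReal.ofReal (ν q) := by
        gcongr
        exact le_iSup₂ (f := fun q (_ : q ∈ expSet a b) =>
          (m : ℝ≥0∞) ^ (1 / q) / ENNReal.ofReal (ν q)) p hp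

/-- Proposition 4. -/
theorem pisier_BGL
    {X : Type*} [MeasurableSpace X] (μ : Measure X) [SigmaFinite μ]
    (a : ℝ) (b : ℝ≥0∞) (ha : 1 ≤ a) (hab : ENNReal.ofReal a < b)
    (ψ ν ζ : ℝ → ℝ) (hψ : IsPsi a b ψ) (hν : IsPsi a b ν) (hζ : IsPsi a b ζ)
    (hmul : ∀ p ∈ expSet a b, ζ p = ψ p * ν p)
    (m : ℕ) (hm : 1 ≤ m)
    (f : Fin m → X → ℝ) (hmeas : ∀ i, Measurable (f i))
    (hfin : (⨆ i, glNorm μ a b ψ (f i)) < ⊤) :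
    glNorm μ a b ζ (fun x => ⨆ i, f i x) ≤
      (⨆ i, glNorm μ a b ψ (f i)) *
        ⨆ p ∈ expSet a b, (m : ℝ≥0∞) ^ (1 / p) / ENNReal.ofReal (ν p) :=
  pisier_BGL_general μ a b ha ψ ν ζ hψ hmul m f hmeas
end

section
/- Proposition 2 (generic chaining bound). Let ψ ∈ Ψ(a,b). Let T be a countable set written as a union T = ⋃_{k≥0} Q_k of finite subsets with Q_0 = {t_0}. Let π_k : T → Q_k for k ≥ 0 be maps such that π_0(t) = t_0 for all t ∈ T and such that for every t ∈ T there exists K(t) with π_k(t) = t for all k ≥ K(t). Let Y assign to each t ∈ T a measurable function Y(t) : X → ℝ. Then, writing sup_{t∈T} Y(t) for the pointwise supremum (a measurable function with values in (−∞,∞]), one has ‖sup_{t∈T} Y(t)‖_{G(ψ)} ≤ ‖Y(t_0)‖_{G(ψ)} + Σ_{k=1}^∞ ‖ max_{t∈T} |Y(π_k(t)) − Y(π_{k−1}(t))| ‖_{G(ψ)} (the inner maximum at each level k is over the finitely many values taken by the pair (π_k(t), π_{k−1}(t))). -/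
open MeasureTheory ENNReal Set

/-!
Telescoping along the chain `t₀ = π 0 t, π 1 t, …, π K t = t` bounds `|Y t|` pointwise by
`|Y t₀|` plus the sum over all levels `k` of the largest increment `|Y (π (k+1) s) - Y (π k s)|`;
this bound no longer depends on `t`, so it also bounds the supremum over `t`. Minkowski's
inequality, extended to countable sums by monotone convergence, turns it into the same bound for
every `L^p` norm with `p ≥ 1`, and dividing by `ψ p` and taking suprema over `p` gives the bound
in the Grand Lebesgue norm. Finiteness of the `Q k` is what makes each level maximum, taken in `ℝ`
as in the statement, a genuine supremum rather than the junk value of an unbounded `⨆`.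
-/

open Finset

section LpNorm

variable {X : Type*} [MeasurableSpace X] (μ : Measure X)

lemma lpNorm_eq_lpNormNN (f : X → ℝ) {p : ℝ} (hp : 0 ≤ p) :
    _root_.lpNorm μ f p = lpNormNN μ (fun x => ENNReal.ofReal |f x|) p := by
  unfold _root_.lpNorm lpNormNN
  congr 1
  exact lintegral_congr fun x => (ENNReal.ofReal_rpow_of_nonneg (abs_nonneg _) hp).symm

lemma lpNormNN_mono {f g : X → ℝ≥0∞} (hfg : f ≤ g) {p : ℝ} (hp : 0 ≤ p) :
    lpNormNN μ f p ≤ lpNormNN μ g p :=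
  ENNReal.rpow_le_rpow (lintegral_mono fun x => ENNReal.rpow_le_rpow (hfg x) hp) (by positivity)

lemma lpNormNN_add_le {f g : X → ℝ≥0∞} (hf : AEMeasurable f μ) (hg : AEMeasurable g μ) {p : ℝ}
    (hp : 1 ≤ p) : lpNormNN μ (f + g) p ≤ lpNormNN μ f p + lpNormNN μ g p :=
  ENNReal.lintegral_Lp_add_le hf hg hp

lemma lpNormNN_sum_le {ι : Type*} (s : Finset ι) {f : ι → X → ℝ≥0∞}
    (hf : ∀ i ∈ s, AEMeasurable (f i) μ) {p : ℝ} (hp : 1 ≤ p) :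
    lpNormNN μ (fun x => ∑ i ∈ s, f i x) p ≤ ∑ i ∈ s, lpNormNN μ (f i) p := by
  induction s using Finset.cons_induction with
  | empty =>
    simp [lpNormNN, ENNReal.zero_rpow_of_pos (zero_lt_one.trans_le hp), zero_lt_one.trans_le hp]
  | cons i s hi ih =>
    have hfs : ∀ j ∈ s, AEMeasurable (f j) μ := fun j hj => hf j (mem_cons_of_mem hj)
    simp only [sum_cons]
    exact (lpNormNN_add_le μ (hf i (mem_cons_self i s))
      (Finset.aemeasurable_fun_sum s hfs) hp).trans (by gcongr; exact ih hfs)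

lemma lpNormNN_iSup_of_monotone {f : ℕ → X → ℝ≥0∞} (hf : ∀ n, Measurable (f n))
    (hmono : Monotone f) {p : ℝ} (hp : 0 < p) :
    lpNormNN μ (fun x => ⨆ n, f n x) p = ⨆ n, lpNormNN μ (f n) p := by
  have hrpow : ∀ {q : ℝ}, 0 < q → ∀ g : ℕ → ℝ≥0∞, (⨆ n, g n) ^ q = ⨆ n, g n ^ q :=
    fun hq g => (ENNReal.orderIsoRpow _ hq).map_iSup g
  unfold lpNormNN
  simp_rw [hrpow hp]
  rw [lintegral_iSup (fun n => (hf n).pow_const p)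
    fun m n hmn x => ENNReal.rpow_le_rpow (hmono hmn x) hp.le, hrpow (by positivity)]

lemma lpNormNN_tsum_le {f : ℕ → X → ℝ≥0∞} (hf : ∀ n, Measurable (f n)) {p : ℝ} (hp : 1 ≤ p) :
    lpNormNN μ (fun x => ∑' n, f n x) p ≤ ∑' n, lpNormNN μ (f n) p := by
  simp_rw [ENNReal.tsum_eq_iSup_nat]
  have hpartial : ∀ n, Measurable fun x => ∑ i ∈ range n, f i x :=
    fun n => Finset.measurable_sum _ fun i _ => hf i
  rw [lpNormNN_iSup_of_monotone μ hpartial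
    (fun m n hmn x => sum_le_sum_of_subset (range_subset_range.2 hmn)) (by linarith)]
  refine iSup_mono fun n => ?_
  exact lpNormNN_sum_le μ (range n) (fun i _ => (hf i).aemeasurable) hp

end LpNorm

lemma EReal.abs_iSup_coe_le {ι : Type*} [Nonempty ι] (f : ι → ℝ) :
    (⨆ i, (f i : EReal)).abs ≤ ⨆ i, ENNReal.ofReal |f i| := by
  set c := ⨆ i, ENNReal.ofReal |f i|
  rcases eq_or_ne c ⊤ with hc | hc
  · exact hc ▸ le_top
  have habs : ∀ i, |f i| ≤ c.toReal := fun i =>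
    (ENNReal.ofReal_le_iff_le_toReal hc).1 (le_iSup (fun i => ENNReal.ofReal |f i|) i)
  obtain ⟨i₀⟩ := ‹Nonempty ι›
  have hupper : ⨆ i, (f i : EReal) ≤ (c.toReal : EReal) :=
    iSup_le fun i => EReal.coe_le_coe ((le_abs_self _).trans (habs i))
  have hlower : (f i₀ : EReal) ≤ ⨆ i, (f i : EReal) := le_iSup (fun i => (f i : EReal)) i₀
  lift ⨆ i, (f i : EReal) to ℝ using ⟨ne_top_of_le_ne_top (EReal.coe_ne_top _) hupper,
    ne_bot_of_le_ne_bot (EReal.coe_ne_bot _) hlower⟩ with r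
  rw [EReal.abs_def, ← ENNReal.ofReal_toReal hc]
  exact ENNReal.ofReal_le_ofReal <| abs_le.2
    ⟨(abs_le.1 (habs i₀)).1.trans (EReal.coe_le_coe_iff.1 hlower), EReal.coe_le_coe_iff.1 hupper⟩

lemma ENNReal.iSup_ofReal_le_ofReal_ciSup {ι : Type*} {f : ι → ℝ} (hf : BddAbove (range f)) :
    ⨆ i, ENNReal.ofReal (f i) ≤ ENNReal.ofReal (⨆ i, f i) :=
  iSup_le fun i => ENNReal.ofReal_le_ofReal (le_ciSup hf i)

lemma ENNReal.iSup₂_div_le_add_tsum {ι : Type*} {s : Set ι} {f g w : ι → ℝ≥0∞}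
    {h : ℕ → ι → ℝ≥0∞} (hle : ∀ i ∈ s, f i ≤ g i + ∑' k, h k i) :
    ⨆ i ∈ s, f i / w i ≤ (⨆ i ∈ s, g i / w i) + ∑' k, ⨆ i ∈ s, h k i / w i := by
  refine iSup₂_le fun i hi => ?_
  calc f i / w i ≤ (g i + ∑' k, h k i) / w i := ENNReal.div_le_div_right (hle i hi) _
    _ = g i / w i + ∑' k, h k i / w i := by
      rw [ENNReal.add_div]
      simp only [div_eq_mul_inv, ENNReal.tsum_mul_right]
    _ ≤ _ := by
      gcongr with k
      · exact le_iSup₂ (f := fun i (_ : i ∈ s) => g i / w i) i hi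
      · exact le_iSup₂ (f := fun i (_ : i ∈ s) => h k i / w i) i hi

section Chaining

variable {T : Type*} (y : T → ℝ) (π : ℕ → T → T)

lemma abs_le_abs_add_sum_chain {t₀ t : T} {K : ℕ} (h0 : π 0 t = t₀) (hK : π K t = t) :
    |y t| ≤ |y t₀| + ∑ k ∈ range K, |y (π (k + 1) t) - y (π k t)| := by
  have htelescope : y t = y t₀ + ∑ k ∈ range K, (y (π (k + 1) t) - y (π k t)) := by
    rw [sum_range_sub (fun k => y (π k t)), h0, hK]
    ring
  rw [htelescope]
  exact (abs_add_le _ _).trans (by gcongr; exact abs_sum_le_sum_abs _ _)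

lemma ofReal_abs_le_add_tsum_iSup_chain {t₀ t : T} {K : ℕ} (h0 : π 0 t = t₀) (hK : π K t = t) :
    ENNReal.ofReal |y t| ≤
      ENNReal.ofReal |y t₀| + ∑' k, ⨆ s, ENNReal.ofReal |y (π (k + 1) s) - y (π k s)| :=
  calc ENNReal.ofReal |y t|
      ≤ ENNReal.ofReal (|y t₀| + ∑ k ∈ range K, |y (π (k + 1) t) - y (π k t)|) :=
        ENNReal.ofReal_le_ofReal (abs_le_abs_add_sum_chain y π h0 hK)
    _ = ENNReal.ofReal |y t₀| + ∑ k ∈ range K, ENNReal.ofReal |y (π (k + 1) t) - y (π k t)| := by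
        rw [ENNReal.ofReal_add (abs_nonneg _) (sum_nonneg fun k _ => abs_nonneg _),
          ENNReal.ofReal_sum_of_nonneg fun k _ => abs_nonneg _]
    _ ≤ _ := by
        gcongr
        exact (sum_le_sum fun k _ => le_iSup (fun s => ENNReal.ofReal |y (π (k + 1) s) - y (π k s)|) t).trans
          (ENNReal.sum_le_tsum _)

lemma abs_iSup_le_add_tsum_iSup_chain [Nonempty T] {t₀ : T} (h0 : ∀ t, π 0 t = t₀)
    (hev : ∀ t, ∃ K, π K t = t) :
    (⨆ t, (y t : EReal)).abs ≤
      ENNReal.ofReal |y t₀| + ∑' k, ⨆ s, ENNReal.ofReal |y (π (k + 1) s) - y (π k s)| :=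
  (EReal.abs_iSup_coe_le y).trans <| iSup_le fun t =>
    ofReal_abs_le_add_tsum_iSup_chain y π (h0 t) (hev t).choose_spec

lemma bddAbove_range_chain_increment (Q : ℕ → Finset T) (hπmem : ∀ k t, π k t ∈ Q k) (k : ℕ) :
    BddAbove (range fun t => |y (π (k + 1) t) - y (π k t)|) := by
  have hpairs : (range fun t => (π (k + 1) t, π k t)).Finite :=
    (Q (k + 1) ×ˢ Q k).finite_toSet.subset <| range_subset_iff.2 fun t => by
      simp [hπmem]
  refine ((hpairs.image fun st : T × T => |y st.1 - y st.2|).subset ?_).bddAbove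
  rintro _ ⟨t, rfl⟩
  exact ⟨_, ⟨t, rfl⟩, rfl⟩

end Chaining

theorem generic_chaining_bound_general
    {X : Type*} [MeasurableSpace X] (μ : Measure X)
    (a : ℝ) (b : ℝ≥0∞) (ha : 1 ≤ a)
    (ψ : ℝ → ℝ)
    (T : Type*) [Countable T]
    (Y : T → X → ℝ) (hYmeas : ∀ t, Measurable (Y t))
    (Q : ℕ → Finset T) (t₀ : T)
    (π : ℕ → T → T) (hπmem : ∀ k t, π k t ∈ Q k) (hπ0 : ∀ t, π 0 t = t₀)
    (hπev : ∀ t, ∃ K, ∀ k, K ≤ k → π k t = t) :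
    glNormE μ a b ψ (fun x => ⨆ t, (Y t x : EReal)) ≤
      glNorm μ a b ψ (Y t₀) +
        ∑' k : ℕ, glNorm μ a b ψ (fun x => ⨆ t, |Y (π (k + 1) t) x - Y (π k t) x|) := by
  have : Nonempty T := ⟨t₀⟩
  set E : ℕ → X → ℝ≥0∞ := fun k x => ⨆ s, ENNReal.ofReal |Y (π (k + 1) s) x - Y (π k s) x|
  have hE : ∀ k, Measurable (E k) := fun k =>
    .iSup fun s => ENNReal.measurable_ofReal.comp ((hYmeas _).sub (hYmeas _)).abs
  refine ENNReal.iSup₂_div_le_add_tsum fun p hp => ?_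
  have hp1 : 1 ≤ p := ha.trans hp.1.le
  have hp0 : 0 ≤ p := zero_le_one.trans hp1
  calc lpNormE μ (fun x => ⨆ t, (Y t x : EReal)) p
      ≤ lpNormNN μ ((fun x => ENNReal.ofReal |Y t₀ x|) + fun x => ∑' k, E k x) p :=
        lpNormNN_mono μ (fun x => abs_iSup_le_add_tsum_iSup_chain (Y · x) π hπ0
          fun t => (hπev t).imp fun K hK => hK K le_rfl) hp0
    _ ≤ lpNormNN μ (fun x => ENNReal.ofReal |Y t₀ x|) p + ∑' k, lpNormNN μ (E k) p :=
        (lpNormNN_add_le μ (ENNReal.measurable_ofReal.comp (hYmeas t₀).abs).aemeasurable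
          (Measurable.tsum hE).aemeasurable hp1).trans
          (add_le_add le_rfl (lpNormNN_tsum_le μ hE hp1))
    _ ≤ _ := by
        simp only [lpNorm_eq_lpNormNN _ _ hp0]
        gcongr with k
        refine lpNormNN_mono μ (fun x => ?_) hp0
        exact (ENNReal.iSup_ofReal_le_ofReal_ciSup
          (bddAbove_range_chain_increment (Y · x) π Q hπmem k)).trans
          (ENNReal.ofReal_le_ofReal (le_abs_self _))

/-- Proposition 2 (generic chaining bound). -/
theorem generic_chaining_bound
    {X : Type*} [MeasurableSpace X] (μ : Measure X) [SigmaFinite μ]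
    (a : ℝ) (b : ℝ≥0∞) (ha : 1 ≤ a) (hab : ENNReal.ofReal a < b)
    (ψ : ℝ → ℝ) (hψ : IsPsi a b ψ)
    (T : Type*) [Countable T]
    (Y : T → X → ℝ) (hYmeas : ∀ t, Measurable (Y t))
    (Q : ℕ → Finset T) (t₀ : T) (hQ0 : Q 0 = {t₀})
    (hcover : ∀ t, ∃ k, t ∈ Q k)
    (π : ℕ → T → T) (hπmem : ∀ k t, π k t ∈ Q k) (hπ0 : ∀ t, π 0 t = t₀)
    (hπev : ∀ t, ∃ K, ∀ k, K ≤ k → π k t = t) :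
    glNormE μ a b ψ (fun x => ⨆ t, (Y t x : EReal)) ≤
      glNorm μ a b ψ (Y t₀) +
        ∑' k : ℕ, glNorm μ a b ψ (fun x => ⨆ t, |Y (π (k + 1) t) x - Y (π k t) x|) :=
  generic_chaining_bound_general μ a b ha ψ T Y hYmeas Q t₀ π hπmem hπ0 hπev
end

section
/- Polynomial entropy, norm form (inequality (3.12)). Let ψ ∈ Ψ(a,b), let κ and C₀ satisfy 0 < κ < a and C₀ ≥ 1, let T be a finite nonempty set and Y(t) : X → ℝ measurable for each t ∈ T with sup_{t∈T} ‖Y(t)‖_{G(ψ)} ≤ 1. Write d_ψ(t,s) = ‖Y(t) − Y(s)‖_{G(ψ)} and assume that for every ε ∈ (0,1] there exists an ε-net of (T, d_ψ) of cardinality at most C₀ ε^{−κ}. Then, setting ψ^{(κ)}(p) = ψ(p)·p/(p − κ) for p ∈ (a,b), there is a constant C depending only on C₀ and κ such that ‖max_{t∈T} Y(t)‖_{G(ψ^{(κ)})} := sup_{p∈(a,b)} ‖max_{t∈T} Y(t)‖_{L^p(μ)}/ψ^{(κ)}(p) ≤ C. -/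
open MeasureTheory ENNReal Set

/-! Chaining along dyadic nets. Let `F k` be a `2⁻ᵏ`-net with at most `C₀ 2^(kκ)` points and
`σ k` a map onto it moving each point by at most `2⁻ᵏ`. Every `t` is linked to the coarse net
`F 0` through `σ K t ∈ F K`, then `σ (K-1)`, …, `σ 0`; taking `K = |T|` makes the last residual
`Y t - Y (σ K t)` harmless, as `|T|^(1/p) 2^(-|T|) ≤ 1`. A maximum of `N` functions of `Lᵖ` norm
at most `M` has `Lᵖ` norm at most `N^(1/p) M`, so the `k`-th link costs `C₀ 2^((k+1)κ/p) 2⁻ᵏ ψ(p)`;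
since `κ/p < 1` these costs sum geometrically to `O(C₀ ψ(p) p/(p-κ))`. -/

theorem Finset.measurable_sup_enorm {X ι E : Type*} [MeasurableSpace X] [NormedAddCommGroup E]
    [MeasurableSpace E] [OpensMeasurableSpace E] (s : Finset ι) {g : ι → X → E}
    (hg : ∀ i ∈ s, Measurable (g i)) : Measurable fun x => s.sup fun i => ‖g i x‖ₑ := by
  have h : (fun x => s.sup fun i => ‖g i x‖ₑ) = s.sup fun i x => ‖g i x‖ₑ := by
    ext x; rw [Finset.sup_apply]
  rw [h]
  exact Finset.sup_induction measurable_const (fun _ h₁ _ h₂ => h₁.sup h₂)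
    fun i hi => (hg i hi).enorm

theorem eLpNorm_finset_sup_enorm_le {X ι E : Type*} [MeasurableSpace X] [NormedAddCommGroup E]
    {μ : Measure X} (s : Finset ι) {g : ι → X → E} (hg : ∀ i ∈ s, AEStronglyMeasurable (g i) μ)
    {p : ℝ} (hp : 0 < p) {M : ℝ≥0∞} (hM : ∀ i ∈ s, eLpNorm (g i) (.ofReal p) μ ≤ M) :
    eLpNorm (fun x => s.sup fun i => ‖g i x‖ₑ) (.ofReal p) μ ≤ (s.card : ℝ≥0∞) ^ (1 / p) * M := by
  have hp₀ : ENNReal.ofReal p ≠ 0 := by simpa using hp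
  simp only [eLpNorm_eq_lintegral_rpow_enorm_toReal hp₀ ofReal_ne_top, toReal_ofReal hp.le,
    enorm_eq_self] at hM ⊢
  have hMp : ∀ i ∈ s, ∫⁻ x, ‖g i x‖ₑ ^ p ∂μ ≤ M ^ p := fun i hi => by
    simpa [← rpow_mul, hp.ne'] using rpow_le_rpow (hM i hi) hp.le
  have hsup : ∀ x, (s.sup fun i => ‖g i x‖ₑ) ^ p ≤ ∑ i ∈ s, ‖g i x‖ₑ ^ p := fun x =>
    Finset.apply_sup_le_sum (f := (· ^ p)) (zero_rpow_of_pos hp)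
      (fun {u v} => by rcases le_total u v with h | h <;> simp [h]) s
  calc (∫⁻ x, (s.sup fun i => ‖g i x‖ₑ) ^ p ∂μ) ^ (1 / p)
      ≤ (∑ i ∈ s, ∫⁻ x, ‖g i x‖ₑ ^ p ∂μ) ^ (1 / p) := by
        gcongr
        exact (lintegral_mono hsup).trans_eq
          (lintegral_finsetSum' s fun i hi => (hg i hi).enorm.pow_const p)
    _ ≤ (s.card * M ^ p) ^ (1 / p) := by
        gcongr
        simpa using Finset.sum_le_card_nsmul s _ _ hMp
    _ = (s.card : ℝ≥0∞) ^ (1 / p) * M := by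
        rw [mul_rpow_of_nonneg _ _ (by positivity), ← rpow_mul, mul_one_div_cancel hp.ne', rpow_one]

theorem enorm_le_chaining {T E : Type*} [NormedAddCommGroup E] (f : T → E) (F : ℕ → Finset T)
    (σ : ℕ → T → T) (hσ : ∀ k t, σ k t ∈ F k) (K : ℕ) (t : T) :
    ‖f t‖ₑ ≤ (F 0).sup (fun u => ‖f u‖ₑ) + ‖f t - f (σ K t)‖ₑ
      + ∑ m ∈ Finset.range K, (F (m + 1)).sup fun u => ‖f u - f (σ m u)‖ₑ := by
  set link := fun m => (F (m + 1)).sup fun u => ‖f u - f (σ m u)‖ₑ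
  have hnet : ∀ n, ∀ u ∈ F n,
      ‖f u‖ₑ ≤ (F 0).sup (fun u => ‖f u‖ₑ) + ∑ m ∈ Finset.range n, link m := by
    intro n
    induction n with
    | zero => simpa using fun u hu => Finset.le_sup (f := fun u => ‖f u‖ₑ) hu
    | succ n ih =>
      intro u hu
      calc ‖f u‖ₑ ≤ ‖f u - f (σ n u)‖ₑ + ‖f (σ n u)‖ₑ := by
            simpa using enorm_add_le (f u - f (σ n u)) (f (σ n u))
        _ ≤ link n + ((F 0).sup (fun u => ‖f u‖ₑ) + ∑ m ∈ Finset.range n, link m) :=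
            add_le_add (Finset.le_sup (f := fun u => ‖f u - f (σ n u)‖ₑ) hu) (ih _ (hσ n u))
        _ = _ := by rw [Finset.sum_range_succ]; ring
  calc ‖f t‖ₑ ≤ ‖f t - f (σ K t)‖ₑ + ‖f (σ K t)‖ₑ := by
        simpa using enorm_add_le (f t - f (σ K t)) (f (σ K t))
    _ ≤ ‖f t - f (σ K t)‖ₑ + ((F 0).sup (fun u => ‖f u‖ₑ) + ∑ m ∈ Finset.range K, link m) := by
        gcongr; exact hnet K _ (hσ K t)
    _ = _ := by ring

theorem eLpNorm_ciSup_le_chaining {X T : Type*} [MeasurableSpace X] {μ : Measure X} [Fintype T]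
    [Nonempty T] {Y : T → X → ℝ} (hY : ∀ t, Measurable (Y t)) (F : ℕ → Finset T)
    (σ : ℕ → T → T) (hσ : ∀ k t, σ k t ∈ F k) (K : ℕ) {q : ℝ≥0∞} (hq : 1 ≤ q) :
    eLpNorm (fun x => ⨆ t, Y t x) q μ
      ≤ eLpNorm (fun x => (F 0).sup fun u => ‖Y u x‖ₑ) q μ
        + eLpNorm (fun x => Finset.univ.sup fun t => ‖Y t x - Y (σ K t) x‖ₑ) q μ
        + ∑ m ∈ Finset.range K,
            eLpNorm (fun x => (F (m + 1)).sup fun u => ‖Y u x - Y (σ m u) x‖ₑ) q μ := by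
  set coarse := fun x => (F 0).sup fun u => ‖Y u x‖ₑ
  set residual := fun x => Finset.univ.sup fun t => ‖Y t x - Y (σ K t) x‖ₑ
  set link := fun m x => (F (m + 1)).sup fun u => ‖Y u x - Y (σ m u) x‖ₑ
  have hcoarse : Measurable coarse := Finset.measurable_sup_enorm _ fun u _ => hY u
  have hresidual : Measurable residual :=
    Finset.measurable_sup_enorm _ fun t _ => (hY t).sub (hY _)
  have hlink : ∀ m ∈ Finset.range K, AEStronglyMeasurable (link m) μ := fun m _ =>
    (Finset.measurable_sup_enorm _ fun u _ => (hY u).sub (hY _)).aestronglyMeasurable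
  have hpointwise :
      ∀ x, ‖⨆ t, Y t x‖ₑ ≤ ‖(coarse + residual + ∑ m ∈ Finset.range K, link m) x‖ₑ := by
    intro x
    obtain ⟨t, ht⟩ := exists_eq_ciSup_of_finite (f := fun t => Y t x)
    rw [← ht, enorm_eq_self, Pi.add_apply, Pi.add_apply, Finset.sum_apply]
    refine (enorm_le_chaining (Y · x) F σ hσ K t).trans ?_
    gcongr
    exact Finset.le_sup (f := fun t => ‖Y t x - Y (σ K t) x‖ₑ) (Finset.mem_univ t)
  calc eLpNorm (fun x => ⨆ t, Y t x) q μ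
      ≤ eLpNorm (coarse + residual + ∑ m ∈ Finset.range K, link m) q μ :=
        eLpNorm_mono_enorm hpointwise
    _ ≤ eLpNorm (coarse + residual) q μ + eLpNorm (∑ m ∈ Finset.range K, link m) q μ :=
        eLpNorm_add_le (hcoarse.add hresidual).aestronglyMeasurable
          (Finset.aestronglyMeasurable_sum _ hlink) hq
    _ ≤ _ := by
        gcongr
        · exact eLpNorm_add_le hcoarse.aestronglyMeasurable hresidual.aestronglyMeasurable hq
        · exact eLpNorm_sum_le hlink hq

theorem lpNorm_eq_eLpNorm {X : Type*} [MeasurableSpace X] (μ : Measure X) (f : X → ℝ) {p : ℝ}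
    (hp : 0 < p) : lpNorm μ f p = eLpNorm f (.ofReal p) μ := by
  rw [eLpNorm_eq_lintegral_rpow_enorm_toReal (by simpa using hp) ofReal_ne_top, toReal_ofReal hp.le,
    _root_.lpNorm]
  congr 1
  refine lintegral_congr fun x => ?_
  rw [Real.enorm_eq_ofReal_abs, ofReal_rpow_of_nonneg (abs_nonneg _) hp.le]

theorem lpNorm_le_mul_of_glNorm_le {X : Type*} [MeasurableSpace X] {μ : Measure X} {a : ℝ}
    {b : ℝ≥0∞} {ψ : ℝ → ℝ} {f : X → ℝ} {c : ℝ≥0∞} {p : ℝ} (hp : p ∈ expSet a b) (hψ : 0 < ψ p)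
    (h : glNorm μ a b ψ f ≤ c) : lpNorm μ f p ≤ c * .ofReal (ψ p) := by
  have hle : lpNorm μ f p / .ofReal (ψ p) ≤ glNorm μ a b ψ f := by
    unfold glNorm
    exact le_iSup₂_of_le p hp le_rfl
  exact (ENNReal.div_le_iff_le_mul (.inl (by simpa using hψ)) (.inl ofReal_ne_top)).1 (hle.trans h)

theorem eLpNorm_finset_sup_le_of_glNorm_le {X ι : Type*} [MeasurableSpace X] {μ : Measure X}
    {a : ℝ} {b : ℝ≥0∞} {ψ : ℝ → ℝ} (s : Finset ι) {g : ι → X → ℝ}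
    (hg : ∀ i ∈ s, Measurable (g i)) {ε : ℝ} (hε : 0 ≤ ε)
    (hgε : ∀ i ∈ s, glNorm μ a b ψ (g i) ≤ .ofReal ε) {p : ℝ} (hp : p ∈ expSet a b)
    (hp₀ : 0 < p) (hψ : 0 < ψ p) :
    eLpNorm (fun x => s.sup fun i => ‖g i x‖ₑ) (.ofReal p) μ
      ≤ .ofReal ((s.card : ℝ) ^ (1 / p) * ε * ψ p) := by
  refine (eLpNorm_finset_sup_enorm_le (M := .ofReal ε * .ofReal (ψ p)) s
    (fun i hi => (hg i hi).aestronglyMeasurable) hp₀ fun i hi => ?_).trans_eq ?_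
  · rw [← lpNorm_eq_eLpNorm μ _ hp₀]
    exact lpNorm_le_mul_of_glNorm_le hp hψ (hgε i hi)
  · rw [← ofReal_natCast, ofReal_rpow_of_nonneg (by positivity) (by positivity),
      ← ofReal_mul (by positivity), ← ofReal_mul (by positivity), mul_assoc]

theorem rpow_one_div_le_of_le_mul_rpow_neg {n C₀ ε κ p : ℝ} (hn : 0 ≤ n) (hC₀ : 1 ≤ C₀)
    (hε : 0 < ε) (hp : 1 ≤ p) (h : n ≤ C₀ * ε ^ (-κ)) : n ^ (1 / p) ≤ C₀ * ε ^ (-κ / p) := by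
  have hp₁ : 1 / p ≤ 1 := by rw [div_le_one (by linarith)]; exact hp
  calc n ^ (1 / p) ≤ (C₀ * ε ^ (-κ)) ^ (1 / p) := by gcongr
    _ = C₀ ^ (1 / p) * ε ^ (-κ / p) := by
        rw [Real.mul_rpow (by linarith) (by positivity), ← Real.rpow_mul hε.le, mul_one_div]
    _ ≤ C₀ * ε ^ (-κ / p) := by gcongr; exact Real.rpow_le_self_of_one_le hC₀ hp₁

theorem eLpNorm_finset_sup_le_of_card_le {X ι : Type*} [MeasurableSpace X] {μ : Measure X}
    {a : ℝ} {b : ℝ≥0∞} {ψ : ℝ → ℝ} (s : Finset ι) {g : ι → X → ℝ}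
    (hg : ∀ i ∈ s, Measurable (g i)) {δ : ℝ} (hδ : 0 ≤ δ)
    (hgδ : ∀ i ∈ s, glNorm μ a b ψ (g i) ≤ .ofReal δ) {C₀ ε κ : ℝ} (hC₀ : 1 ≤ C₀) (hε : 0 < ε)
    (hs : (s.card : ℝ) ≤ C₀ * ε ^ (-κ)) {p : ℝ} (hp : p ∈ expSet a b) (hp₁ : 1 ≤ p)
    (hψ : 0 < ψ p) :
    eLpNorm (fun x => s.sup fun i => ‖g i x‖ₑ) (.ofReal p) μ
      ≤ .ofReal (C₀ * ε ^ (-κ / p) * δ * ψ p) := by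
  refine (eLpNorm_finset_sup_le_of_glNorm_le s hg hδ hgδ hp (by linarith) hψ).trans
    (ofReal_le_ofReal ?_)
  gcongr
  exact rpow_one_div_le_of_le_mul_rpow_neg (Nat.cast_nonneg _) hC₀ hε hp₁ hs

theorem natCast_rpow_one_div_mul_inv_two_pow_le_one (n : ℕ) {p : ℝ} (hp : 1 ≤ p) :
    (n : ℝ) ^ (1 / p) * 2⁻¹ ^ n ≤ 1 := by
  have hp₁ : 1 / p ≤ 1 := by rw [div_le_one (by linarith)]; exact hp
  have h2n : (1 : ℝ) ≤ 2 ^ n := one_le_pow₀ one_le_two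
  calc (n : ℝ) ^ (1 / p) * 2⁻¹ ^ n ≤ (2 ^ n : ℝ) ^ (1 / p) * 2⁻¹ ^ n := by
        gcongr; exact_mod_cast Nat.lt_two_pow_self.le
    _ ≤ 2 ^ n * 2⁻¹ ^ n := by gcongr; exact Real.rpow_le_self_of_one_le h2n hp₁
    _ = 1 := by rw [← mul_pow]; norm_num

theorem sum_range_inv_two_pow_rpow_neg_mul_le {κ p : ℝ} (hκ : 0 ≤ κ) (hκp : κ < p) (K : ℕ) :
    ∑ m ∈ Finset.range K, ((2⁻¹ : ℝ) ^ (m + 1)) ^ (-(κ / p)) * 2⁻¹ ^ m ≤ 4 * (p / (p - κ)) := by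
  have hp : 0 < p := hκ.trans_lt hκp
  set θ := κ / p
  have hθ₀ : 0 ≤ θ := by positivity
  have hθ₁ : θ < 1 := (div_lt_one hp).2 hκp
  set s : ℝ := 2 ^ θ
  have hs₁ : 1 ≤ s := Real.one_le_rpow one_le_two hθ₀
  have hs : s ≤ 1 + θ := by
    simpa [s, one_add_one_eq_two] using
      rpow_one_add_le_one_add_mul_self (s := 1) (by norm_num) hθ₀ hθ₁.le
  have hterm : ∀ m : ℕ, ((2⁻¹ : ℝ) ^ (m + 1)) ^ (-θ) * 2⁻¹ ^ m = s * (s / 2) ^ m := by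
    intro m
    rw [← Real.rpow_pow_comm (by norm_num), Real.rpow_neg (by norm_num),
      Real.inv_rpow (by norm_num), inv_inv, pow_succ, div_pow, div_eq_mul_inv, inv_pow]
    ring
  calc ∑ m ∈ Finset.range K, ((2⁻¹ : ℝ) ^ (m + 1)) ^ (-θ) * 2⁻¹ ^ m
      = s * ∑ m ∈ Finset.range K, (s / 2) ^ m := by simp_rw [hterm, Finset.mul_sum]
    _ ≤ s * (1 / (1 - s / 2)) := by
        gcongr
        simpa using geom_sum_Ico_le_of_lt_one (m := 0) (n := K) (x := s / 2) (by positivity)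
          (by linarith)
    _ = 2 * s / (2 - s) := by field_simp
    _ ≤ 4 / (1 - θ) := by
        rw [div_le_div_iff₀ (by linarith) (by linarith)]
        nlinarith
    _ = 4 * (p / (p - κ)) := by
        simp only [θ]
        field_simp

theorem lpNorm_ciSup_le_of_dyadic_nets {X T : Type*} [MeasurableSpace X] {μ : Measure X}
    [Fintype T] [Nonempty T] {a : ℝ} {b : ℝ≥0∞} {ψ : ℝ → ℝ} {κ C₀ : ℝ} (hκ : 0 ≤ κ)
    (hC₀ : 1 ≤ C₀) {Y : T → X → ℝ} (hY : ∀ t, Measurable (Y t))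
    (hY₁ : ∀ t, glNorm μ a b ψ (Y t) ≤ 1) (F : ℕ → Finset T)
    (hF : ∀ k, ((F k).card : ℝ) ≤ C₀ * ((2⁻¹ : ℝ) ^ k) ^ (-κ)) (σ : ℕ → T → T)
    (hσF : ∀ k t, σ k t ∈ F k)
    (hσ : ∀ k t, glNorm μ a b ψ (fun x => Y t x - Y (σ k t) x) ≤ .ofReal ((2⁻¹ : ℝ) ^ k))
    {p : ℝ} (hp : p ∈ expSet a b) (hp₁ : 1 ≤ p) (hκp : κ < p) (hψ : 0 < ψ p) :
    lpNorm μ (fun x => ⨆ t, Y t x) p ≤ .ofReal (6 * C₀ * (ψ p * (p / (p - κ)))) := by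
  have hp₀ : 0 < p := by linarith
  have hq : 1 ≤ ENNReal.ofReal p := by simpa using hp₁
  set K := Fintype.card T
  set term : ℕ → ℝ := fun m => ((2⁻¹ : ℝ) ^ (m + 1)) ^ (-(κ / p)) * 2⁻¹ ^ m
  have hcoarse : eLpNorm (fun x => (F 0).sup fun u => ‖Y u x‖ₑ) (.ofReal p) μ
      ≤ .ofReal (C₀ * ψ p) := by
    simpa using eLpNorm_finset_sup_le_of_card_le (κ := κ) (F 0) (fun u _ => hY u) zero_le_one
      (fun u _ => by simpa using hY₁ u) hC₀ one_pos (by simpa using hF 0) hp hp₁ hψ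
  have hresidual : eLpNorm (fun x => Finset.univ.sup fun t => ‖Y t x - Y (σ K t) x‖ₑ)
      (.ofReal p) μ ≤ .ofReal (ψ p) := by
    refine (eLpNorm_finset_sup_le_of_glNorm_le Finset.univ (fun t _ => (hY t).sub (hY _))
      (by positivity) (fun t _ => hσ K t) hp hp₀ hψ).trans (ofReal_le_ofReal ?_)
    rw [Finset.card_univ]
    exact mul_le_of_le_one_left hψ.le (natCast_rpow_one_div_mul_inv_two_pow_le_one K hp₁)
  have hlink : ∀ m, eLpNorm (fun x => (F (m + 1)).sup fun u => ‖Y u x - Y (σ m u) x‖ₑ)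
      (.ofReal p) μ ≤ .ofReal (C₀ * ψ p * term m) := fun m => by
    refine (eLpNorm_finset_sup_le_of_card_le (F (m + 1)) (fun u _ => (hY u).sub (hY _))
      (by positivity) (fun u _ => hσ m u) hC₀ (by positivity) (hF (m + 1)) hp hp₁ hψ).trans_eq ?_
    simp only [term, neg_div]
    ring_nf
  have hsum : ∑ m ∈ Finset.range K, term m ≤ 4 * (p / (p - κ)) :=
    sum_range_inv_two_pow_rpow_neg_mul_le hκ hκp K
  rw [lpNorm_eq_eLpNorm μ _ hp₀]
  calc eLpNorm (fun x => ⨆ t, Y t x) (.ofReal p) μ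
      ≤ _ := eLpNorm_ciSup_le_chaining hY F σ hσF K hq
    _ ≤ .ofReal (C₀ * ψ p) + .ofReal (ψ p) + ∑ m ∈ Finset.range K, .ofReal (C₀ * ψ p * term m) := by
        gcongr with m
        exact hlink m
    _ = .ofReal (C₀ * ψ p + ψ p + C₀ * ψ p * ∑ m ∈ Finset.range K, term m) := by
        rw [Finset.mul_sum, ofReal_add (by positivity) (by positivity),
          ofReal_add (by positivity) (by positivity), ofReal_sum_of_nonneg fun m _ => by positivity]
    _ ≤ .ofReal (6 * C₀ * (ψ p * (p / (p - κ)))) := by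
        refine ofReal_le_ofReal ?_
        have hy₁ : 1 ≤ p / (p - κ) := by rw [le_div_iff₀ (by linarith)]; linarith
        have hC₀ψ : 0 ≤ C₀ * ψ p := by positivity
        nlinarith [mul_le_mul_of_nonneg_left hsum hC₀ψ, mul_le_mul_of_nonneg_left hy₁ hC₀ψ,
          mul_le_mul_of_nonneg_left hy₁ hψ.le, mul_le_mul_of_nonneg_right hC₀ hψ.le]

/-- Polynomial entropy, norm form (inequality (3.12)). -/
theorem polynomial_entropy_BGL (κ C₀ : ℝ) (hκ : 0 < κ) (hC₀ : 1 ≤ C₀) :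
    ∃ C : ℝ, 0 < C ∧
      ∀ (X : Type*) [MeasurableSpace X], ∀ (μ : Measure X) [SigmaFinite μ],
      ∀ (a : ℝ) (b : ℝ≥0∞), 1 ≤ a → ENNReal.ofReal a < b → κ < a →
      ∀ (ψ : ℝ → ℝ), IsPsi a b ψ →
      ∀ (T : Type*) [Fintype T] [Nonempty T],
      ∀ (Y : T → X → ℝ), (∀ t, Measurable (Y t)) →
      (∀ t : T, glNorm μ a b ψ (Y t) ≤ 1) →
      (∀ ε : ℝ, 0 < ε → ε ≤ 1 → ∃ F : Finset T,
        ((F.card : ℝ) ≤ C₀ * ε ^ (-κ)) ∧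
          ∀ t : T, ∃ s ∈ F, glNorm μ a b ψ (fun x => Y t x - Y s x) ≤ ENNReal.ofReal ε) →
      (⨆ p ∈ expSet a b,
          lpNorm μ (fun x => ⨆ t, Y t x) p / ENNReal.ofReal (ψ p * (p / (p - κ)))) ≤
        ENNReal.ofReal C := by
  refine ⟨6 * C₀, by positivity, ?_⟩
  intro X _ μ _ a b ha _ hκa ψ hψ T _ _ Y hY hY₁ hnet
  choose F hF σ hσF hσ using fun k : ℕ =>
    hnet ((2⁻¹ : ℝ) ^ k) (by positivity) (pow_le_one₀ (by norm_num) (by norm_num))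
  refine iSup₂_le fun p hp => ENNReal.div_le_of_le_mul ?_
  rw [← ofReal_mul (by positivity)]
  exact lpNorm_ciSup_le_of_dyadic_nets hκ.le hC₀ hY hY₁ F hF σ hσF hσ hp (ha.trans hp.1.le)
    (hκa.trans hp.1) (one_pos.trans_le (hψ.one_le p hp))
end

section
/- Entropy with logarithmic correction, case κ₂ > κ₁ (inequality (3.16)). Let ψ ∈ Ψ(a,b), let 0 < κ₁ < a, κ₂ > κ₁ and C₀ ≥ 1, let T be a finite nonempty set and Y(t) : X → ℝ measurable for each t ∈ T with sup_{t∈T} ‖Y(t)‖_{G(ψ)} ≤ 1. Write d_ψ(t,s) = ‖Y(t) − Y(s)‖_{G(ψ)} and assume that for every ε ∈ (0,1] there exists an ε-net of (T, d_ψ) of cardinality at most C₀ ε^{−κ₁} (1 + |log ε|)^{−κ₂}. Then there is a constant C depending only on C₀, κ₁, κ₂ and a such that ‖max_{t∈T} Y(t)‖_{G(ψ)} ≤ C. -/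
open MeasureTheory ENNReal Set

/-!
Fix an exponent `p ∈ (a, b)`. The `Lᵖ` norm of the maximum of the functions `|f_s|`, `s ∈ S`, is
at most `|S|^{1/p}` times the largest `‖f_s‖_p`, because `(max_s |f_s|)^p ≤ ∑_s |f_s|^p`.
Choosing nets `F_n` at the scales `2^{-n}` with projections `q_n : T → F_n`, and applying this
bound to each link `Y_s - Y_{q_n s}` (`s ∈ F_{n+1}`), chaining gives
`‖max_t Y_t‖_p ≤ ψ(p) (|F_0|^{1/p} + ∑_n |F_{n+1}|^{1/p} 2^{-n} + |T|^{1/p} 2^{-N})`,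
and the last term vanishes as `N → ∞`. Since `p > a`, `|F_n|^{1/p} ≤ C₀ 2^{nκ₁/a}`
(the logarithmic factor is at most `1`), and `κ₁/a < 1` makes the sum a geometric series
bounded independently of `p`. Dividing by `ψ(p)` and taking the supremum over `p` gives the claim.
-/

open Finset Filter Topology

section GrandLebesgue

variable {X : Type*} [MeasurableSpace X] {μ : Measure X} {a : ℝ} {b : ℝ≥0∞} {ψ : ℝ → ℝ}
  {f : X → ℝ} {c : ℝ≥0∞} {p : ℝ}

theorem lpNorm_eq_eLpNorm' (hp : 0 ≤ p) : lpNorm μ f p = eLpNorm' f p μ := by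
  simp only [_root_.lpNorm, eLpNorm'_eq_lintegral_enorm, Real.enorm_eq_ofReal_abs,
    ENNReal.ofReal_rpow_of_nonneg (abs_nonneg _) hp]

theorem lpNorm_le_of_glNorm_le (hp : p ∈ expSet a b) (hψp : 0 < ψ p)
    (h : glNorm μ a b ψ f ≤ c) :
    lpNorm μ f p ≤ c * ENNReal.ofReal (ψ p) := by
  rw [← ENNReal.div_le_iff_le_mul (.inl (by simpa using hψp)) (.inl ofReal_ne_top)]
  exact (le_iSup₂ (f := fun p _ => lpNorm μ f p / ENNReal.ofReal (ψ p)) p hp).trans h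

theorem glNorm_le_of_lpNorm_le (h : ∀ p ∈ expSet a b, lpNorm μ f p ≤ c * ENNReal.ofReal (ψ p)) :
    glNorm μ a b ψ f ≤ c :=
  iSup₂_le fun p hp => ENNReal.div_le_of_le_mul (h p hp)

end GrandLebesgue

section MaximalInequality

variable {X ι : Type*} [MeasurableSpace X] {μ : Measure X}

theorem eLpNorm'_finsetSup_le {g : ι → X → ℝ≥0∞} {s : Finset ι}
    (hg : ∀ i ∈ s, AEMeasurable (g i) μ) {p : ℝ} (hp : 0 < p) {B : ℝ≥0∞}
    (hB : ∀ i ∈ s, eLpNorm' (g i) p μ ≤ B) :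
    eLpNorm' (fun x => s.sup (g · x)) p μ ≤ (#s : ℝ≥0∞) ^ (1 / p) * B := by
  have hpow_le : ∀ i ∈ s, ∫⁻ x, g i x ^ p ∂μ ≤ B ^ p := fun i hi => by
    simpa [eLpNorm'_eq_lintegral_enorm, ← ENNReal.rpow_mul, hp.ne'] using
      ENNReal.rpow_le_rpow (hB i hi) hp.le
  have hsup_pow : ∀ x, s.sup (g · x) ^ p ≤ ∑ i ∈ s, g i x ^ p := fun x => by
    rw [apply_sup_eq_sup_comp_of_linearOrder (· ^ p)
      (ENNReal.monotone_rpow_of_nonneg hp.le) (ENNReal.zero_rpow_of_pos hp)]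
    exact Finset.sup_le fun i hi => single_le_sum (fun j _ => zero_le) hi
  have hint : ∫⁻ x, s.sup (g · x) ^ p ∂μ ≤ #s * B ^ p :=
    calc ∫⁻ x, s.sup (g · x) ^ p ∂μ ≤ ∫⁻ x, ∑ i ∈ s, g i x ^ p ∂μ := lintegral_mono hsup_pow
      _ = ∑ i ∈ s, ∫⁻ x, g i x ^ p ∂μ :=
        lintegral_finsetSum' s fun i hi => (hg i hi).pow_const p
      _ ≤ ∑ _i ∈ s, B ^ p := sum_le_sum hpow_le
      _ = #s * B ^ p := by rw [sum_const, nsmul_eq_mul]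
  calc eLpNorm' (fun x => s.sup (g · x)) p μ ≤ (#s * B ^ p) ^ (1 / p) := by
        simpa only [eLpNorm'_eq_lintegral_enorm, enorm_eq_self] using
          ENNReal.rpow_le_rpow hint (by positivity)
    _ = (#s : ℝ≥0∞) ^ (1 / p) * B := by
        rw [ENNReal.mul_rpow_of_nonneg _ _ (by positivity), ← ENNReal.rpow_mul,
          mul_one_div_cancel hp.ne', ENNReal.rpow_one]

end MaximalInequality

section Chaining

def supEnorm {X T : Type*} (Y : T → X → ℝ) (s : Finset T) (x : X) : ℝ≥0∞ :=
  s.sup fun t => ‖Y t x‖ₑ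

/-- The chaining sum for nets `F n` at scales `ε n`: the links from level `n + 1` down to level
`n` are indexed by `F (n + 1)` and have length at most `ε n`. -/
noncomputable def dudleySum {T : Type*} (F : ℕ → Finset T) (ε : ℕ → ℝ≥0∞) (p : ℝ) (N : ℕ) :
    ℝ≥0∞ :=
  (#(F 0) : ℝ≥0∞) ^ (1 / p) + ∑ n ∈ range N, (#(F (n + 1)) : ℝ≥0∞) ^ (1 / p) * ε n

theorem enorm_iSup_le_supEnorm {X T : Type*} [Fintype T] [Nonempty T] (Y : T → X → ℝ)
    (x : X) : ‖⨆ t, Y t x‖ₑ ≤ supEnorm Y univ x := by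
  obtain ⟨t, ht⟩ := exists_eq_ciSup_of_finite (f := fun t => Y t x)
  rw [← ht]
  exact le_sup (f := fun t => ‖Y t x‖ₑ) (mem_univ t)

variable {X T : Type*} [MeasurableSpace X] {μ : Measure X} {Y : T → X → ℝ} {p : ℝ}

theorem measurable_supEnorm (hY : ∀ t, Measurable (Y t)) (s : Finset T) :
    Measurable (supEnorm Y s) := by
  have hsup : supEnorm Y s = s.sup fun t x => ‖Y t x‖ₑ :=
    funext fun x => (Finset.sup_apply s (fun t x => ‖Y t x‖ₑ) x).symm
  rw [hsup]
  exact sup_induction measurable_const (fun _ hf _ hg => hf.sup hg) fun t _ => (hY t).enorm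

theorem eLpNorm'_supEnorm_le (hY : ∀ t, Measurable (Y t)) (hp : 0 < p) {s : Finset T}
    {B : ℝ≥0∞} (hB : ∀ t ∈ s, eLpNorm' (Y t) p μ ≤ B) :
    eLpNorm' (supEnorm Y s) p μ ≤ (#s : ℝ≥0∞) ^ (1 / p) * B :=
  eLpNorm'_finsetSup_le (fun t _ => (hY t).enorm.aemeasurable) hp fun t ht => by
    rw [eLpNorm'_enorm]; exact hB t ht

theorem eLpNorm'_supEnorm_le_add (hY : ∀ t, Measurable (Y t)) (hp : 1 ≤ p) {A B : Finset T}
    {q : T → T} (hq : ∀ t ∈ A, q t ∈ B) :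
    eLpNorm' (supEnorm Y A) p μ ≤
      eLpNorm' (supEnorm (fun t => Y t - Y (q t)) A) p μ + eLpNorm' (supEnorm Y B) p μ := by
  have hpt : ∀ x, supEnorm Y A x ≤ supEnorm (fun t => Y t - Y (q t)) A x + supEnorm Y B x :=
    fun x => Finset.sup_le fun t ht =>
      calc ‖Y t x‖ₑ ≤ ‖Y t x - Y (q t) x‖ₑ + ‖Y (q t) x‖ₑ := by
            simpa using enorm_add_le (Y t x - Y (q t) x) (Y (q t) x)
        _ ≤ _ := add_le_add (le_sup (f := fun t => ‖(Y t - Y (q t)) x‖ₑ) ht)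
            (le_sup (f := fun t => ‖Y t x‖ₑ) (hq t ht))
  calc eLpNorm' (supEnorm Y A) p μ
      ≤ eLpNorm' (supEnorm (fun t => Y t - Y (q t)) A + supEnorm Y B) p μ :=
        eLpNorm'_mono_enorm_ae (by linarith) (.of_forall hpt)
    _ ≤ _ := eLpNorm'_add_le
        (measurable_supEnorm (fun t => (hY t).sub (hY (q t))) A).aestronglyMeasurable
        (measurable_supEnorm hY B).aestronglyMeasurable hp

theorem eLpNorm'_supEnorm_le_chain (hY : ∀ t, Measurable (Y t)) (hp : 1 ≤ p)
    {F : ℕ → Finset T} {q : ℕ → T → T} (hq : ∀ n t, q n t ∈ F n) {δ : ℕ → ℝ≥0∞}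
    (hδ : ∀ n t, eLpNorm' (Y t - Y (q n t)) p μ ≤ δ n) (N : ℕ) :
    eLpNorm' (supEnorm Y (F N)) p μ ≤
      eLpNorm' (supEnorm Y (F 0)) p μ + ∑ n ∈ range N, (#(F (n + 1)) : ℝ≥0∞) ^ (1 / p) * δ n := by
  induction N with
  | zero => simp
  | succ N ih =>
    calc eLpNorm' (supEnorm Y (F (N + 1))) p μ
        ≤ eLpNorm' (supEnorm (fun t => Y t - Y (q N t)) (F (N + 1))) p μ +
            eLpNorm' (supEnorm Y (F N)) p μ :=
          eLpNorm'_supEnorm_le_add hY hp fun t _ => hq N t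
      _ ≤ (#(F (N + 1)) : ℝ≥0∞) ^ (1 / p) * δ N + (eLpNorm' (supEnorm Y (F 0)) p μ +
            ∑ n ∈ range N, (#(F (n + 1)) : ℝ≥0∞) ^ (1 / p) * δ n) :=
          add_le_add (eLpNorm'_supEnorm_le (fun t => (hY t).sub (hY (q N t))) (by linarith)
            fun t _ => hδ N t) ih
      _ = _ := by rw [sum_range_succ]; ring

theorem eLpNorm'_iSup_le_dudleySum [Fintype T] [Nonempty T] (hY : ∀ t, Measurable (Y t))
    (hp : 1 ≤ p) {F : ℕ → Finset T} {q : ℕ → T → T} (hq : ∀ n t, q n t ∈ F n) {M : ℝ≥0∞}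
    (hM : ∀ t, eLpNorm' (Y t) p μ ≤ M) {ε : ℕ → ℝ≥0∞}
    (hε : ∀ n t, eLpNorm' (Y t - Y (q n t)) p μ ≤ ε n * M) (N : ℕ) :
    eLpNorm' (fun x => ⨆ t, Y t x) p μ ≤
      ((Fintype.card T : ℝ≥0∞) ^ (1 / p) * ε N + dudleySum F ε p N) * M := by
  have hp0 : 0 < p := by linarith
  calc eLpNorm' (fun x => ⨆ t, Y t x) p μ ≤ eLpNorm' (supEnorm Y univ) p μ :=
        eLpNorm'_mono_enorm_ae hp0.le (.of_forall fun x => by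
          simpa using enorm_iSup_le_supEnorm Y x)
    _ ≤ eLpNorm' (supEnorm (fun t => Y t - Y (q N t)) univ) p μ +
          eLpNorm' (supEnorm Y (F N)) p μ :=
        eLpNorm'_supEnorm_le_add hY hp fun t _ => hq N t
    _ ≤ (Fintype.card T : ℝ≥0∞) ^ (1 / p) * (ε N * M) + (eLpNorm' (supEnorm Y (F 0)) p μ +
          ∑ n ∈ range N, (#(F (n + 1)) : ℝ≥0∞) ^ (1 / p) * (ε n * M)) :=
        add_le_add (eLpNorm'_supEnorm_le (fun t => (hY t).sub (hY (q N t))) hp0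
          fun t _ => hε N t) (eLpNorm'_supEnorm_le_chain hY hp hq hε N)
    _ ≤ (Fintype.card T : ℝ≥0∞) ^ (1 / p) * (ε N * M) + ((#(F 0) : ℝ≥0∞) ^ (1 / p) * M +
          ∑ n ∈ range N, (#(F (n + 1)) : ℝ≥0∞) ^ (1 / p) * (ε n * M)) := by
        gcongr
        exact eLpNorm'_supEnorm_le hY hp0 fun t _ => hM t
    _ = _ := by simp only [dudleySum, add_mul, sum_mul, mul_assoc]

theorem eLpNorm'_iSup_le_of_dudleySum_le [Fintype T] [Nonempty T] (hY : ∀ t, Measurable (Y t))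
    (hp : 1 ≤ p) {F : ℕ → Finset T} {q : ℕ → T → T} (hq : ∀ n t, q n t ∈ F n) {M : ℝ≥0∞}
    (hM_top : M ≠ ⊤) (hM : ∀ t, eLpNorm' (Y t) p μ ≤ M) {ε : ℕ → ℝ≥0∞}
    (hε : ∀ n t, eLpNorm' (Y t - Y (q n t)) p μ ≤ ε n * M)
    (hε_lim : Tendsto ε atTop (𝓝 0)) {D : ℝ≥0∞}
    (hD : ∀ N, dudleySum F ε p N ≤ D) :
    eLpNorm' (fun x => ⨆ t, Y t x) p μ ≤ D * M := by
  have hlim : Tendsto (fun N => ((Fintype.card T : ℝ≥0∞) ^ (1 / p) * ε N + D) * M) atTop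
      (𝓝 (D * M)) := by
    have hcard : (Fintype.card T : ℝ≥0∞) ^ (1 / p) ≠ ⊤ :=
      ENNReal.rpow_ne_top_of_nonneg (by positivity) (natCast_ne_top _)
    simpa using ENNReal.Tendsto.mul_const
      ((ENNReal.Tendsto.const_mul hε_lim (.inr hcard)).add_const D) (.inr hM_top)
  refine ge_of_tendsto' hlim fun N => ?_
  grw [eLpNorm'_iSup_le_dudleySum hY hp hq hM hε N, hD N]

end Chaining

theorem two_rpow_div_two_lt_one {θ : ℝ} (hθ : θ < 1) : (2 : ℝ) ^ θ / 2 < 1 := by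
  rw [div_lt_one two_pos]
  simpa using Real.rpow_lt_rpow_of_exponent_lt one_lt_two hθ

/-- `C₀ + ∑ₙ C₀ 2^{(n+1)θ} 2^{-n}`, summed as a geometric series with ratio `2^θ / 2`. -/
noncomputable def entropyConst (C₀ θ : ℝ) : ℝ := C₀ * (1 + 2 ^ θ / (1 - 2 ^ θ / 2))

theorem entropyConst_pos {C₀ θ : ℝ} (hC₀ : 0 < C₀) (hθ : θ < 1) : 0 < entropyConst C₀ θ := by
  have hr : 0 < 1 - (2 : ℝ) ^ θ / 2 := sub_pos.2 (two_rpow_div_two_lt_one hθ)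
  unfold entropyConst
  positivity

theorem add_sum_le_entropyConst {C₀ θ : ℝ} (hC₀ : 0 ≤ C₀) (hθ : θ < 1) {w : ℕ → ℝ}
    (hw : ∀ n, w n ≤ C₀ * ((2 : ℝ) ^ θ) ^ n) (N : ℕ) :
    w 0 + ∑ n ∈ range N, w (n + 1) * ((2 : ℝ) ^ n)⁻¹ ≤ entropyConst C₀ θ := by
  set r := (2 : ℝ) ^ θ / 2
  have hr0 : 0 < r := by positivity
  have hterm : ∀ n, w (n + 1) * ((2 : ℝ) ^ n)⁻¹ ≤ C₀ * 2 ^ θ * r ^ n := fun n =>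
    calc w (n + 1) * ((2 : ℝ) ^ n)⁻¹ ≤ C₀ * ((2 : ℝ) ^ θ) ^ (n + 1) * ((2 : ℝ) ^ n)⁻¹ :=
          mul_le_mul_of_nonneg_right (hw _) (by positivity)
      _ = C₀ * 2 ^ θ * r ^ n := by rw [div_pow, pow_succ]; ring
  have hgeom : ∑ n ∈ range N, r ^ n ≤ (1 - r)⁻¹ := by
    have := geom_sum_Ico_le_of_lt_one (m := 0) (n := N) hr0.le (two_rpow_div_two_lt_one hθ)
    rwa [← range_eq_Ico, pow_zero, one_div] at this
  calc w 0 + ∑ n ∈ range N, w (n + 1) * ((2 : ℝ) ^ n)⁻¹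
      ≤ C₀ + C₀ * 2 ^ θ * ∑ n ∈ range N, r ^ n := by
        rw [mul_sum]
        exact add_le_add (by simpa using hw 0) (sum_le_sum fun n _ => hterm n)
    _ ≤ C₀ + C₀ * 2 ^ θ * (1 - r)⁻¹ := by gcongr
    _ = entropyConst C₀ θ := by simp only [entropyConst, r]; ring

theorem net_size_le_geometric {C₀ κ₁ κ₂ : ℝ} (hC₀ : 0 ≤ C₀) (hκ₂ : 0 ≤ κ₂) (n : ℕ) :
    C₀ * ((2 : ℝ) ^ n)⁻¹ ^ (-κ₁) * (1 + |Real.log ((2 : ℝ) ^ n)⁻¹|) ^ (-κ₂) ≤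
      C₀ * ((2 : ℝ) ^ κ₁) ^ n := by
  have hlog : (1 + |Real.log ((2 : ℝ) ^ n)⁻¹|) ^ (-κ₂) ≤ 1 :=
    Real.rpow_le_one_of_one_le_of_nonpos (by linarith [abs_nonneg (Real.log ((2 : ℝ) ^ n)⁻¹)])
      (by linarith)
  have hscale : ((2 : ℝ) ^ n)⁻¹ ^ (-κ₁) = ((2 : ℝ) ^ κ₁) ^ n := by
    rw [Real.inv_rpow (by positivity), Real.rpow_neg (by positivity), inv_inv,
      Real.rpow_pow_comm zero_le_two]
  calc C₀ * ((2 : ℝ) ^ n)⁻¹ ^ (-κ₁) * (1 + |Real.log ((2 : ℝ) ^ n)⁻¹|) ^ (-κ₂)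
      ≤ C₀ * ((2 : ℝ) ^ n)⁻¹ ^ (-κ₁) * 1 := by gcongr
    _ = C₀ * ((2 : ℝ) ^ κ₁) ^ n := by rw [mul_one, hscale]

theorem rpow_one_div_le_geometric {k C₀ κ a p : ℝ} (hk : 0 ≤ k) {n : ℕ}
    (hkn : k ≤ C₀ * ((2 : ℝ) ^ κ) ^ n) (hC₀ : 1 ≤ C₀) (hκ : 0 ≤ κ) (ha : 1 ≤ a) (hap : a ≤ p) :
    k ^ (1 / p) ≤ C₀ * ((2 : ℝ) ^ (κ / a)) ^ n := by
  have hp : 0 < p := by linarith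
  have hC₀' : C₀ ^ (1 / p) ≤ C₀ :=
    Real.rpow_le_self_of_one_le hC₀ ((div_le_one hp).2 (by linarith))
  have hgeom : (((2 : ℝ) ^ κ) ^ n) ^ (1 / p) ≤ ((2 : ℝ) ^ (κ / a)) ^ n := by
    rw [← Real.rpow_pow_comm (by positivity), ← Real.rpow_mul zero_le_two, mul_one_div]
    gcongr
    · exact one_le_two
  calc k ^ (1 / p) ≤ (C₀ * ((2 : ℝ) ^ κ) ^ n) ^ (1 / p) := by gcongr
    _ = C₀ ^ (1 / p) * (((2 : ℝ) ^ κ) ^ n) ^ (1 / p) :=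
        Real.mul_rpow (by linarith) (by positivity)
    _ ≤ C₀ * ((2 : ℝ) ^ (κ / a)) ^ n := by gcongr

theorem dudleySum_le_entropyConst {T : Type*} {F : ℕ → Finset T} {p C₀ θ : ℝ} (hp : 0 < p)
    (hC₀ : 0 ≤ C₀) (hθ : θ < 1) (hF : ∀ n, (#(F n) : ℝ) ^ (1 / p) ≤ C₀ * ((2 : ℝ) ^ θ) ^ n)
    (N : ℕ) :
    dudleySum F (fun n => ENNReal.ofReal ((2 ^ n)⁻¹)) p N ≤
      ENNReal.ofReal (entropyConst C₀ θ) := by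
  have hcast : ∀ n, (#(F n) : ℝ≥0∞) ^ (1 / p) = ENNReal.ofReal ((#(F n) : ℝ) ^ (1 / p)) :=
    fun n => by
      rw [← ENNReal.ofReal_rpow_of_nonneg (Nat.cast_nonneg _) (by positivity),
        ENNReal.ofReal_natCast]
  simp only [dudleySum, hcast]
  refine le_of_eq_of_le ?_ (ENNReal.ofReal_le_ofReal (add_sum_le_entropyConst hC₀ hθ hF N))
  rw [ENNReal.ofReal_add (by positivity) (by positivity),
    ENNReal.ofReal_sum_of_nonneg fun n _ => by positivity]
  refine congrArg _ (sum_congr rfl fun n _ => ?_)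
  rw [ENNReal.ofReal_mul (by positivity)]

/-- Entropy with logarithmic correction, case κ₂ > κ₁ (inequality (3.16)). -/
theorem log_entropy_BGL_gt (a κ₁ κ₂ C₀ : ℝ) (ha : 1 ≤ a)
    (hκ₁ : 0 < κ₁) (hκ₁a : κ₁ < a) (hκ₁₂ : κ₁ < κ₂) (hC₀ : 1 ≤ C₀) :
    ∃ C : ℝ, 0 < C ∧
      ∀ (X : Type*) [MeasurableSpace X], ∀ (μ : Measure X) [SigmaFinite μ],
      ∀ (b : ℝ≥0∞), ENNReal.ofReal a < b →
      ∀ (ψ : ℝ → ℝ), IsPsi a b ψ →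
      ∀ (T : Type*) [Fintype T] [Nonempty T],
      ∀ (Y : T → X → ℝ), (∀ t, Measurable (Y t)) →
      (∀ t : T, glNorm μ a b ψ (Y t) ≤ 1) →
      (∀ ε : ℝ, 0 < ε → ε ≤ 1 → ∃ F : Finset T,
        ((F.card : ℝ) ≤ C₀ * ε ^ (-κ₁) * (1 + |Real.log ε|) ^ (-κ₂)) ∧
          ∀ t : T, ∃ s ∈ F, glNorm μ a b ψ (fun x => Y t x - Y s x) ≤ ENNReal.ofReal ε) →
      glNorm μ a b ψ (fun x => ⨆ t, Y t x) ≤ ENNReal.ofReal C := by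
  have hθ : κ₁ / a < 1 := (div_lt_one (by linarith)).2 hκ₁a
  refine ⟨entropyConst C₀ (κ₁ / a), entropyConst_pos (by linarith) hθ, ?_⟩
  intro X _ μ _ b _ ψ hψ T _ _ Y hY hYnorm hnet
  choose F hFcard hFnet using fun n : ℕ =>
    hnet ((2 ^ n)⁻¹) (by positivity) (inv_le_one_of_one_le₀ (one_le_pow₀ one_le_two))
  choose q hqF hq using hFnet
  refine glNorm_le_of_lpNorm_le fun p hp => ?_
  have hp1 : 1 ≤ p := ha.trans hp.1.le
  have hψp : 0 < ψ p := one_pos.trans_le (hψ.one_le p hp)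
  have hF : ∀ n, (#(F n) : ℝ) ^ (1 / p) ≤ C₀ * ((2 : ℝ) ^ (κ₁ / a)) ^ n := fun n =>
    rpow_one_div_le_geometric (Nat.cast_nonneg _)
      ((hFcard n).trans (net_size_le_geometric (by linarith) (by linarith) n)) hC₀ hκ₁.le ha
      hp.1.le
  rw [lpNorm_eq_eLpNorm' (by linarith)]
  refine eLpNorm'_iSup_le_of_dudleySum_le hY hp1 hqF ofReal_ne_top (fun t => ?_)
    (fun n t => ?_) ?_ (dudleySum_le_entropyConst (by linarith) (by linarith) hθ hF)
  · rw [← lpNorm_eq_eLpNorm' (by linarith)]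
    simpa using lpNorm_le_of_glNorm_le hp hψp (hYnorm t)
  · rw [← lpNorm_eq_eLpNorm' (by linarith)]
    exact lpNorm_le_of_glNorm_le hp hψp (hq n t)
  · simpa using ENNReal.tendsto_ofReal
      (tendsto_inv_atTop_zero.comp (tendsto_pow_atTop_atTop_of_one_lt one_lt_two))
end
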